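/- arXiv:cs/0312038 — 2 statements merged into one kernel-verified Lean document; each statement's English description precedes it below -/
import Mathlib

section
/- In the voting model with n voters and majority threshold t = ⌊n/2⌋ + 1, consider a context u in which exactly m voters vote 1, where t ≤ m ≤ n (so O = 1 in the unique solution, i.e., Mr. B wins). Then for every voter i with X_i = 1 in (M,u), X_i = 1 is a cause of O = 1 in (M,u) and dr((M,u), X_i = 1, O = 1) = 1/(m − t + 1); and for every voter i with X_i = 0 in (M,u), X_i = 0 is not a cause of O = 1, so dr((M,u), X_i = 0, O = 1) = 0. (For example, for n = 11 this gives degree of responsibility 1/6 for each voter when the vote is 11–0, and 1 for each of the six B-voters when the vote is 6–5.) -/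
open Classical

/-- A causal model over exogenous variables `U` and endogenous variables `V`,
with integer-valued variables.  `Rexo Y` / `R X` are the (intended) ranges of
the variables, and `F X` is the structural equation for the endogenous
variable `X`, giving its value as a function of the values of all other
variables. -/
structure CausalModel (U V : Type) where
  Rexo : U → Set ℤ
  R : V → Set ℤ
  F : V → (U → ℤ) → (V → ℤ) → ℤ

namespace CausalModel

variable {U V : Type}

/-- A causal model is recursive if the variables can be ordered so that each
structural equation depends only on the values of strictly earlier endogenous
variables (equivalently, the dependency graph is acyclic). -/
def Recursive (M : CausalModel U V) : Prop :=
  ∃ ord : V → ℕ, ∀ (X : V) (u : U → ℤ) (g g' : V → ℤ),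
    (∀ Y, ord Y < ord X → g Y = g' Y) → M.F X u g = M.F X u g'

/-- `s` simultaneously satisfies all the structural equations in context `u`. -/
def IsSolution (M : CausalModel U V) (u : U → ℤ) (s : V → ℤ) : Prop :=
  ∀ X, s X = M.F X u s

/-- The (unique, for recursive models) solution of the equations in context `u`. -/
noncomputable def solution (M : CausalModel U V) (u : U → ℤ) : V → ℤ :=
  Classical.epsilon fun s => M.IsSolution u s

/-- The model `M_{A ← y}` obtained by replacing the equations of the variables
in `A` by the constant values given by `y`. -/
noncomputable def intervene (M : CausalModel U V) (A : Set V) (y : V → ℤ) :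
    CausalModel U V where
  Rexo := M.Rexo
  R := M.R
  F := fun X u g => if X ∈ A then y X else M.F X u g

end CausalModel

/-- Boolean combinations of primitive events `X = x`. -/
inductive CausalFormula (V : Type) where
  | tru : CausalFormula V
  | eq : V → ℤ → CausalFormula V
  | not : CausalFormula V → CausalFormula V
  | and : CausalFormula V → CausalFormula V → CausalFormula V
  | or : CausalFormula V → CausalFormula V → CausalFormula V
  | iff : CausalFormula V → CausalFormula V → CausalFormula V

/-- Truth of a causal formula under an assignment to the endogenous variables. -/
def CausalFormula.holds {V : Type} (s : V → ℤ) : CausalFormula V → Prop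
  | tru => True
  | eq X x => s X = x
  | not φ => ¬ φ.holds s
  | and φ χ => φ.holds s ∧ χ.holds s
  | or φ χ => φ.holds s ∨ χ.holds s
  | iff φ χ => φ.holds s ↔ χ.holds s

/-- `(M,u) ⊨ [A ← y] φ` : `φ` holds in the unique solution of `M_{A ← y}` in
context `u`. -/
def sat {U V : Type} (M : CausalModel U V) (u : U → ℤ) (A : Set V) (y : V → ℤ)
    (φ : CausalFormula V) : Prop :=
  φ.holds ((M.intervene A y).solution u)

/-- Condition AC2 of the Halpern–Pearl definition of causality, for the single
conjunct `X = x`, witnessed by the partition `(Wᶜ, W)` (so `Z = Wᶜ ∋ X`) and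
the setting `(x', w')` of `(X, W)`. -/
def AC2 {U V : Type} (M : CausalModel U V) (u : U → ℤ) (X : V) (x : ℤ)
    (φ : CausalFormula V) (W : Set V) (x' : ℤ) (w' : V → ℤ) : Prop :=
  X ∉ W ∧ x' ∈ M.R X ∧ (∀ Y ∈ W, w' Y ∈ M.R Y) ∧
  -- AC2(a): (M,u) ⊨ [X ← x', W ← w'] ¬φ
  ¬ sat M u (insert X W) (fun Y => if Y = X then x' else w' Y) φ ∧
  -- AC2(b): (M,u) ⊨ [X ← x, W ← w', Z' ← z*] φ for all subsets Z' of Z = Wᶜ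
  ∀ Z' : Set V, Z' ⊆ Wᶜ →
    sat M u (insert X (W ∪ Z'))
      (fun Y => if Y = X then x else if Y ∈ W then w' Y else M.solution u Y) φ

/-- `X = x` is a cause of `φ` in `(M,u)`: AC1 together with AC2 (AC3 is
automatic for single conjuncts). -/
def IsCause {U V : Type} (M : CausalModel U V) (u : U → ℤ) (X : V) (x : ℤ)
    (φ : CausalFormula V) : Prop :=
  (M.solution u X = x ∧ φ.holds (M.solution u)) ∧
  ∃ W x' w', AC2 M u X x φ W x' w'

/-- The degree of responsibility of `X = x` for `φ` in `(M,u)` : `0` if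
`X = x` is not a cause of `φ`, and otherwise `1/(k+1)` where `k` is the
minimal, over all AC2 witnesses, number of variables of `W` whose value in
`w'` differs from their value in the unique solution of `(M,u)`. -/
noncomputable def dr {U V : Type} (M : CausalModel U V) (u : U → ℤ) (X : V)
    (x : ℤ) (φ : CausalFormula V) : ℚ :=
  if IsCause M u X x φ then
    1 / ((sInf {k : ℕ | ∃ W x' w', AC2 M u X x φ W x' w' ∧
        {Y | Y ∈ W ∧ w' Y ≠ M.solution u Y}.ncard = k} : ℕ) + 1 : ℚ)
  else 0

/-- The voting model with `n` voters and majority threshold `t`: the vote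
`X_i` of voter `i` copies the value determined by the exogenous context, and
the outcome `O` is `1` iff at least `t` voters vote `1`. -/
def votingModel (n t : ℕ) : CausalModel (Fin n) (Fin n ⊕ Unit) where
  Rexo := fun _ => {0, 1}
  R := fun _ => {0, 1}
  F := fun X u g =>
    match X with
    | Sum.inl i => u i
    | Sum.inr _ =>
        if t ≤ (Finset.univ.filter fun i : Fin n => g (Sum.inl i) = 1).card
        then 1 else 0

/-!
In any AC2 witness for voter `i` the outcome `O` lies outside `W`, so AC2 becomes a statement
about the number of `1`-votes: with `X_i ← x'` fewer than `t` remain, with `X_i` at its actual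
value at least `t` do. Apart from voter `i` itself, every `1`-vote lost in AC2(a) is a changed
member of `W`; hence at least `m - t` variables must be changed, and flipping `m - t` other
`1`-voters to `0` achieves this. A vote `X_i = 0` is never a cause: switching it to anything
else cannot decrease the number of `1`-votes, so AC2(a) would contradict AC2(b).
-/

open Finset Function

namespace CausalModel

variable {U V : Type}

theorem solution_eq_of_unique {M : CausalModel U V} {u : U → ℤ} {s : V → ℤ}
    (hs : M.IsSolution u s) (huniq : ∀ s', M.IsSolution u s' → s' = s) :
    M.solution u = s :=
  huniq _ (Classical.epsilon_spec ⟨s, hs⟩)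

@[simp]
theorem intervene_empty (M : CausalModel U V) (y : V → ℤ) : M.intervene ∅ y = M := by
  simp [intervene]

end CausalModel

section Responsibility

variable {U V : Type} {M : CausalModel U V} {u : U → ℤ} {X : V} {x : ℤ} {φ : CausalFormula V}

theorem dr_of_not_isCause (h : ¬ IsCause M u X x φ) : dr M u X x φ = 0 :=
  if_neg h

theorem dr_eq_of_minimal_witness (hc : IsCause M u X x φ) {W : Set V} {x' : ℤ} {w' : V → ℤ}
    (hW : AC2 M u X x φ W x' w') {k : ℕ} (hk : {Y | Y ∈ W ∧ w' Y ≠ M.solution u Y}.ncard = k)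
    (hmin : ∀ W x' w', AC2 M u X x φ W x' w' → k ≤ {Y | Y ∈ W ∧ w' Y ≠ M.solution u Y}.ncard) :
    dr M u X x φ = 1 / (k + 1) := by
  have hleast : IsLeast {k : ℕ | ∃ W x' w', AC2 M u X x φ W x' w' ∧
      {Y | Y ∈ W ∧ w' Y ≠ M.solution u Y}.ncard = k} k :=
    ⟨⟨W, x', w', hW, hk⟩, fun _ ⟨W, x', w', hW, hk⟩ => hk ▸ hmin W x' w' hW⟩
  rw [dr, if_pos hc, hleast.csInf_eq]

end Responsibility

namespace votingModel

variable {n t : ℕ}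

noncomputable def votesUnder (u : Fin n → ℤ) (A : Set (Fin n ⊕ Unit)) (y : Fin n ⊕ Unit → ℤ)
    (j : Fin n) : ℤ :=
  if Sum.inl j ∈ A then y (Sum.inl j) else u j

def yesVoters (v : Fin n → ℤ) : Finset (Fin n) := {j | v j = 1}

@[simp]
theorem votesUnder_empty (u : Fin n → ℤ) (y : Fin n ⊕ Unit → ℤ) : votesUnder u ∅ y = u := by
  funext j; simp [votesUnder]

theorem solution_intervene (u : Fin n → ℤ) (A : Set (Fin n ⊕ Unit)) (y : Fin n ⊕ Unit → ℤ) :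
    ((votingModel n t).intervene A y).solution u =
      Sum.elim (votesUnder u A y) fun _ => if Sum.inr () ∈ A then y (Sum.inr ()) else
        if t ≤ #(yesVoters (votesUnder u A y)) then 1 else 0 := by
  apply CausalModel.solution_eq_of_unique
  · rintro (j | ⟨⟩) <;> rfl
  · intro s hs
    have hvotes : (fun j => s (Sum.inl j)) = votesUnder u A y := funext fun j => hs (Sum.inl j)
    funext Y
    rcases Y with j | ⟨⟩
    · exact hs (Sum.inl j)
    · rw [hs (Sum.inr ())]
      simp only [CausalModel.intervene, votingModel, Sum.elim_inr]
      rw [← hvotes]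
      rfl

theorem solution_inl (u : Fin n → ℤ) (j : Fin n) :
    (votingModel n t).solution u (Sum.inl j) = u j := by
  simpa using congrFun (solution_intervene (t := t) u ∅ 0) (Sum.inl j)

theorem solution_outcome (u : Fin n → ℤ) :
    (votingModel n t).solution u (Sum.inr ()) = if t ≤ #(yesVoters u) then 1 else 0 := by
  simpa using congrFun (solution_intervene (t := t) u ∅ 0) (Sum.inr ())

theorem sat_outcome_iff_of_notMem {u : Fin n → ℤ} {A : Set (Fin n ⊕ Unit)}
    {y : Fin n ⊕ Unit → ℤ} (hA : Sum.inr () ∉ A) :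
    sat (votingModel n t) u A y (.eq (Sum.inr ()) 1) ↔ t ≤ #(yesVoters (votesUnder u A y)) := by
  simp [sat, CausalFormula.holds, solution_intervene, hA]

theorem sat_outcome_iff_of_mem {u : Fin n → ℤ} {A : Set (Fin n ⊕ Unit)}
    {y : Fin n ⊕ Unit → ℤ} (hA : Sum.inr () ∈ A) :
    sat (votingModel n t) u A y (.eq (Sum.inr ()) 1) ↔ y (Sum.inr ()) = 1 := by
  simp [sat, CausalFormula.holds, solution_intervene, hA]

theorem card_yesVoters_le_add (v v' : Fin n → ℤ) :
    #(yesVoters v) ≤ #(yesVoters v') + #{j | v j ≠ v' j} := by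
  calc #(yesVoters v) ≤ #(yesVoters v \ yesVoters v') + #(yesVoters v') :=
        card_le_card_sdiff_add_card
    _ ≤ #{j | v j ≠ v' j} + #(yesVoters v') := by
        gcongr
        intro j
        simp only [yesVoters, mem_sdiff, mem_filter, mem_univ, true_and]
        rintro ⟨hv, hv'⟩
        rw [hv]
        exact Ne.symm hv'
    _ = _ := add_comm _ _

theorem card_ne_update_le (u v : Fin n → ℤ) (i : Fin n) (a : ℤ) :
    #{j | u j ≠ update v i a j} ≤ #{j | v j ≠ u j} + 1 := by
  calc #{j | u j ≠ update v i a j} ≤ #(insert i ({j | v j ≠ u j} : Finset (Fin n))) := by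
        refine card_le_card fun j => ?_
        by_cases hj : j = i
        · simp [hj]
        · simp [hj, ne_comm]
    _ ≤ _ := card_insert_le _ _

theorem yesVoters_update_zero_subset (v : Fin n → ℤ) (i : Fin n) (a : ℤ) :
    yesVoters (update v i 0) ⊆ yesVoters (update v i a) := by
  intro j
  by_cases hj : j = i <;> simp [yesVoters, update_apply, hj]

section AC2

variable {u : Fin n → ℤ} {i : Fin n} {x x' : ℤ} {W : Set (Fin n ⊕ Unit)} {w' : Fin n ⊕ Unit → ℤ}

/-- With `O ∈ W` both interventions of AC2 fix `O` to `w' O`, so (a) and (b) contradict. -/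
theorem outcome_notMem_of_AC2
    (h : AC2 (votingModel n t) u (Sum.inl i) x (.eq (Sum.inr ()) 1) W x' w') :
    Sum.inr () ∉ W := by
  intro hO
  obtain ⟨-, -, -, ha, hb⟩ := h
  have hb := hb ∅ (Set.empty_subset _)
  rw [Set.union_empty] at hb
  rw [sat_outcome_iff_of_mem (Set.mem_insert_of_mem _ hO)] at ha hb
  simp [hO] at ha hb
  exact ha hb

theorem card_yesVoters_lt_of_AC2
    (h : AC2 (votingModel n t) u (Sum.inl i) x (.eq (Sum.inr ()) 1) W x' w') :
    #(yesVoters (update (votesUnder u W w') i x')) < t := by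
  have hO := outcome_notMem_of_AC2 h
  obtain ⟨-, -, -, ha, -⟩ := h
  rw [sat_outcome_iff_of_notMem (by simp [hO]), Nat.not_le] at ha
  convert ha using 4
  funext j
  by_cases hj : j = i <;> simp [votesUnder, hj]

theorem le_card_yesVoters_of_AC2
    (h : AC2 (votingModel n t) u (Sum.inl i) x (.eq (Sum.inr ()) 1) W x' w') :
    t ≤ #(yesVoters (update (votesUnder u W w') i x)) := by
  have hO := outcome_notMem_of_AC2 h
  obtain ⟨-, -, -, -, hb⟩ := h
  have hb := hb ∅ (Set.empty_subset _)
  rw [Set.union_empty, sat_outcome_iff_of_notMem (by simp [hO])] at hb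
  convert hb using 4
  funext j
  by_cases hj : j = i
  · simp [votesUnder, hj]
  · by_cases hjW : Sum.inl j ∈ W <;> simp [votesUnder, hj, hjW]

theorem AC2_of_card_yesVoters (hiW : Sum.inl i ∉ W) (hO : Sum.inr () ∉ W)
    (hx' : x' ∈ ({0, 1} : Set ℤ)) (hw' : ∀ Y ∈ W, w' Y ∈ ({0, 1} : Set ℤ))
    (hu : t ≤ #(yesVoters u)) (ha : #(yesVoters (update (votesUnder u W w') i x')) < t)
    (hb : t ≤ #(yesVoters (update (votesUnder u W w') i x))) :
    AC2 (votingModel n t) u (Sum.inl i) x (.eq (Sum.inr ()) 1) W x' w' := by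
  refine ⟨hiW, hx', hw', ?_, fun Z' hZ' => ?_⟩
  · rw [sat_outcome_iff_of_notMem (by simp [hO]), Nat.not_le]
    convert ha using 4
    funext j
    by_cases hj : j = i <;> simp [votesUnder, hj]
  · by_cases hOZ : Sum.inr () ∈ Z'
    · rw [sat_outcome_iff_of_mem (by simp [hOZ])]
      simp [hO, solution_outcome, hu]
    · rw [sat_outcome_iff_of_notMem (by simp [hO, hOZ])]
      convert hb using 4
      funext j
      by_cases hj : j = i
      · simp [votesUnder, hj]
      · by_cases hjW : Sum.inl j ∈ W <;> simp [votesUnder, hj, hjW, solution_inl]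

theorem card_votesUnder_ne_le_ncard (u : Fin n → ℤ) (W : Set (Fin n ⊕ Unit))
    (w' : Fin n ⊕ Unit → ℤ) :
    #{j | votesUnder u W w' j ≠ u j} ≤
      {Y | Y ∈ W ∧ w' Y ≠ (votingModel n t).solution u Y}.ncard := by
  rw [← Set.ncard_coe_finset, ← Set.ncard_image_of_injective _ Sum.inl_injective]
  refine Set.ncard_le_ncard ?_ (Set.toFinite _)
  rintro _ ⟨j, hj, rfl⟩
  rw [mem_coe, mem_filter] at hj
  simp only [votesUnder] at hj
  split_ifs at hj with hjW
  · exact ⟨hjW, by rw [solution_inl]; exact hj.2⟩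
  · exact absurd rfl hj.2

theorem card_yesVoters_sub_le_of_AC2
    (h : AC2 (votingModel n t) u (Sum.inl i) x (.eq (Sum.inr ()) 1) W x' w') :
    #(yesVoters u) - t ≤ {Y | Y ∈ W ∧ w' Y ≠ (votingModel n t).solution u Y}.ncard := by
  have hkept := card_yesVoters_lt_of_AC2 h
  have hlost := card_yesVoters_le_add u (update (votesUnder u W w') i x')
  have hupdate := card_ne_update_le u (votesUnder u W w') i x'
  have hchanged := card_votesUnder_ne_le_ncard (t := t) u W w'
  omega

end AC2

theorem exists_AC2_of_yesVoter {u : Fin n → ℤ} {i : Fin n} (hi : u i = 1) (ht : 1 ≤ t)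
    (htu : t ≤ #(yesVoters u)) :
    ∃ W x' w', AC2 (votingModel n t) u (Sum.inl i) 1 (.eq (Sum.inr ()) 1) W x' w' ∧
      {Y | Y ∈ W ∧ w' Y ≠ (votingModel n t).solution u Y}.ncard = #(yesVoters u) - t := by
  have hiyes : i ∈ yesVoters u := by simp [yesVoters, hi]
  obtain ⟨S, hS, hcard⟩ := exists_subset_card_eq (s := (yesVoters u).erase i)
    (n := #(yesVoters u) - t) (by rw [card_erase_of_mem hiyes]; omega)
  have hiS : i ∉ S := fun h => by simpa using hS h
  have hSyes : S ⊆ yesVoters u := hS.trans (erase_subset _ _)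
  have hvotes : votesUnder u (Sum.inl '' S) 0 = fun j => if j ∈ S then 0 else u j := by
    funext j; simp [votesUnder]
  refine ⟨Sum.inl '' S, 0, 0, AC2_of_card_yesVoters (by simpa using hiS) (by simp) (by simp)
    (by simp) htu ?_ ?_, ?_⟩
  · have hyes :
        yesVoters (update (votesUnder u (Sum.inl '' S) 0) i 0) = yesVoters u \ insert i S := by
      ext j
      by_cases hj : j = i <;> by_cases hjS : j ∈ S <;> simp [yesVoters, hvotes, hj, hjS]
    rw [hyes, card_sdiff_of_subset (insert_subset hiyes hSyes), card_insert_of_notMem hiS, hcard]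
    omega
  · have hyes : yesVoters (update (votesUnder u (Sum.inl '' S) 0) i 1) = yesVoters u \ S := by
      ext j
      by_cases hj : j = i
      · simp [yesVoters, hj, hi, hiS]
      · by_cases hjS : j ∈ S <;> simp [yesVoters, hvotes, hj, hjS]
    rw [hyes, card_sdiff_of_subset hSyes, hcard]
    omega
  · have hchanged : {Y | Y ∈ Sum.inl '' (S : Set (Fin n)) ∧ (0 : Fin n ⊕ Unit → ℤ) Y ≠
        (votingModel n t).solution u Y} = Sum.inl '' S := by
      refine Set.sep_eq_self_iff_mem_true.mpr ?_
      rintro _ ⟨j, hj, rfl⟩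
      have : u j = 1 := by simpa [yesVoters] using hSyes hj
      simp [solution_inl, this]
    rw [hchanged, Set.ncard_image_of_injective _ Sum.inl_injective, Set.ncard_coe_finset, hcard]

theorem not_AC2_zero (u : Fin n → ℤ) (i : Fin n) (W : Set (Fin n ⊕ Unit)) (x' : ℤ)
    (w' : Fin n ⊕ Unit → ℤ) :
    ¬ AC2 (votingModel n t) u (Sum.inl i) 0 (.eq (Sum.inr ()) 1) W x' w' := fun h =>
  (card_yesVoters_lt_of_AC2 h).not_ge <| (le_card_yesVoters_of_AC2 h).trans <|
    card_le_card (yesVoters_update_zero_subset _ _ _)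

end votingModel

theorem voting_responsibility_general (n m : ℕ) (hm₁ : n / 2 + 1 ≤ m)
    (u : Fin n → ℤ)
    (hcount : (Finset.univ.filter fun i => u i = 1).card = m) :
    ∀ i : Fin n,
      (u i = 1 →
        IsCause (votingModel n (n / 2 + 1)) u (Sum.inl i) 1
            (CausalFormula.eq (Sum.inr ()) 1) ∧
        dr (votingModel n (n / 2 + 1)) u (Sum.inl i) 1
            (CausalFormula.eq (Sum.inr ()) 1)
          = 1 / (((m - (n / 2 + 1) : ℕ) : ℚ) + 1)) ∧
      (u i = 0 →
        ¬ IsCause (votingModel n (n / 2 + 1)) u (Sum.inl i) 0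
            (CausalFormula.eq (Sum.inr ()) 1) ∧
        dr (votingModel n (n / 2 + 1)) u (Sum.inl i) 0
            (CausalFormula.eq (Sum.inr ()) 1) = 0) := by
  replace hcount : #(votingModel.yesVoters u) = m := hcount
  intro i
  refine ⟨fun hi => ?_, fun _ => ?_⟩
  · obtain ⟨W, x', w', hW, hk⟩ :=
      votingModel.exists_AC2_of_yesVoter hi (Nat.le_add_left 1 _) (hcount ▸ hm₁)
    have hcause : IsCause (votingModel n (n / 2 + 1)) u (Sum.inl i) 1
        (CausalFormula.eq (Sum.inr ()) 1) :=
      ⟨⟨(votingModel.solution_inl u i).trans hi, by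
        simp [CausalFormula.holds, votingModel.solution_outcome, hcount, hm₁]⟩, W, x', w', hW⟩
    refine ⟨hcause, ?_⟩
    rw [dr_eq_of_minimal_witness hcause hW hk fun _ _ _ h =>
      votingModel.card_yesVoters_sub_le_of_AC2 h, hcount]
  · have hnot : ¬ IsCause (votingModel n (n / 2 + 1)) u (Sum.inl i) 0
        (CausalFormula.eq (Sum.inr ()) 1) :=
      fun ⟨_, W, x', w', hW⟩ => votingModel.not_AC2_zero u i W x' w' hW
    exact ⟨hnot, dr_of_not_isCause hnot⟩

/-- In the voting model with `n` voters and threshold `t = ⌊n/2⌋ + 1`, in a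
context where exactly `m` voters vote `1` with `t ≤ m ≤ n` (so Mr. B wins):
every voter who votes `1` is a cause of `O = 1` with degree of responsibility
`1/(m - t + 1)`, and every voter who votes `0` is not a cause of `O = 1` and
has degree of responsibility `0`. -/
theorem voting_responsibility (n m : ℕ) (hm₁ : n / 2 + 1 ≤ m) (hm₂ : m ≤ n)
    (u : Fin n → ℤ) (hvals : ∀ i, u i = 0 ∨ u i = 1)
    (hcount : (Finset.univ.filter fun i => u i = 1).card = m) :
    ∀ i : Fin n,
      (u i = 1 →
        IsCause (votingModel n (n / 2 + 1)) u (Sum.inl i) 1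
            (CausalFormula.eq (Sum.inr ()) 1) ∧
        dr (votingModel n (n / 2 + 1)) u (Sum.inl i) 1
            (CausalFormula.eq (Sum.inr ()) 1)
          = 1 / (((m - (n / 2 + 1) : ℕ) : ℚ) + 1)) ∧
      (u i = 0 →
        ¬ IsCause (votingModel n (n / 2 + 1)) u (Sum.inl i) 0
            (CausalFormula.eq (Sum.inr ()) 1) ∧
        dr (votingModel n (n / 2 + 1)) u (Sum.inl i) 0
            (CausalFormula.eq (Sum.inr ()) 1) = 0) :=
  voting_responsibility_general n m hm₁ u hcount
end

section
/- Let Ψ = ∃X∀Y ψ be a closed QBF that has a witness, let Z ⊆ X, U = X \ Z, and for each U_i ∈ U introduce a fresh variable U'_i; let U' be the set of these fresh variables and let Ψ' = ∃(X ∪ U')∀Y (ψ ∧ ⋀_{U_i ∈ U}(U_i ↔ ¬U'_i)). Then SUBSET_MAXQSAT₂(Ψ, Z) = MAXQSAT₂(Ψ') − |U|. -/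
open Classical

/-- Propositional formulas over variables of type `α`. -/
inductive PropForm (α : Type) where
  | tru : PropForm α
  | var : α → PropForm α
  | not : PropForm α → PropForm α
  | and : PropForm α → PropForm α → PropForm α
  | or : PropForm α → PropForm α → PropForm α
  | iff : PropForm α → PropForm α → PropForm α

/-- Evaluation of a propositional formula under a truth assignment. -/
def PropForm.eval {α : Type} (g : α → Bool) : PropForm α → Bool
  | tru => true
  | var v => g v
  | not φ => !(φ.eval g)
  | and φ χ => φ.eval g && χ.eval g
  | or φ χ => φ.eval g || χ.eval g
  | iff φ χ => φ.eval g == χ.eval g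

/-- The set of propositional variables occurring in a formula. -/
def PropForm.vars {α : Type} [DecidableEq α] : PropForm α → Finset α
  | tru => ∅
  | var v => {v}
  | not φ => φ.vars
  | and φ χ => φ.vars ∪ χ.vars
  | or φ χ => φ.vars ∪ χ.vars
  | iff φ χ => φ.vars ∪ χ.vars

/-- Replace every propositional variable by its negation. -/
def PropForm.negVars {α : Type} : PropForm α → PropForm α
  | tru => tru
  | var v => .not (.var v)
  | not φ => .not φ.negVars
  | and φ χ => .and φ.negVars χ.negVars
  | or φ χ => .or φ.negVars χ.negVars
  | iff φ χ => .iff φ.negVars χ.negVars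

/-- Conjunction of a list of propositional formulas. -/
def PropForm.bigAnd {α : Type} (l : List (PropForm α)) : PropForm α :=
  l.foldr .and .tru

/-- `f` is a witness for the closed QBF `∃X ∀Y ψ` : `ψ` evaluates to true
under `f` (on `X`) combined with every truth assignment to the remaining
variables. -/
def IsWitness {α : Type} [DecidableEq α] (X : Finset α) (ψ : PropForm α)
    (f : α → Bool) : Prop :=
  ∀ g : α → Bool, (∀ v ∈ X, g v = f v) → ψ.eval g = true

/-- `MAXQSAT₂(∃X∀Y ψ)` : the maximal number of variables of `X` assigned true
by some witness, or `-1` if there is no witness. -/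
noncomputable def MAXQSAT2 {α : Type} [DecidableEq α] (X : Finset α)
    (ψ : PropForm α) : ℤ :=
  if ∃ f, IsWitness X ψ f then
    sSup {k : ℤ | ∃ f, IsWitness X ψ f ∧
      ((X.filter fun v => f v = true).card : ℤ) = k}
  else -1

/-- `MINQSAT₂(∃X∀Y ψ)` : the minimal number of variables of `X` assigned true
by some witness, or `|X| + 1` if there is no witness. -/
noncomputable def MINQSAT2 {α : Type} [DecidableEq α] (X : Finset α)
    (ψ : PropForm α) : ℤ :=
  if ∃ f, IsWitness X ψ f then
    sInf {k : ℤ | ∃ f, IsWitness X ψ f ∧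
      ((X.filter fun v => f v = true).card : ℤ) = k}
  else X.card + 1

/-- `SUBSET_MAXQSAT₂(∃X∀Y ψ, Z)` : the maximal number of variables of `Z`
assigned true by some witness, or `-1` if there is no witness. -/
noncomputable def SUBSET_MAXQSAT2 {α : Type} [DecidableEq α] (X Z : Finset α)
    (ψ : PropForm α) : ℤ :=
  if ∃ f, IsWitness X ψ f then
    sSup {k : ℤ | ∃ f, IsWitness X ψ f ∧
      ((Z.filter fun v => f v = true).card : ℤ) = k}
  else -1

/-- Given `Ψ = ∃X∀Y ψ`, `Z ⊆ X`, `U = X \ Z` and fresh variables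
`fresh '' U`, the matrix of the auxiliary QBF
`Ψ' = ∃(X ∪ U')∀Y (ψ ∧ ⋀_{U_i ∈ U} (U_i ↔ ¬U'_i))`. -/
noncomputable def auxMatrix {α : Type} [DecidableEq α] (X Z : Finset α) (fresh : α → α)
    (ψ : PropForm α) : PropForm α :=
  PropForm.and ψ
    (PropForm.bigAnd ((X \ Z).toList.map fun v =>
      PropForm.iff (.var v) (.not (.var (fresh v)))))

lemma PropForm.eval_congr {α : Type} [DecidableEq α] (φ : PropForm α) (g g' : α → Bool)
    (h : ∀ v ∈ φ.vars, g v = g' v) : φ.eval g = φ.eval g' := by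
  induction φ with
  | tru => rfl
  | var v => exact h v (by simp [PropForm.vars])
  | not φ ih =>
      simp only [PropForm.eval]; rw [ih (fun v hv => h v hv)]
  | and φ χ ih1 ih2 =>
      simp only [PropForm.eval]
      rw [ih1 (fun v hv => h v (by simp [PropForm.vars, hv])),
        ih2 (fun v hv => h v (by simp [PropForm.vars, hv]))]
  | or φ χ ih1 ih2 =>
      simp only [PropForm.eval]
      rw [ih1 (fun v hv => h v (by simp [PropForm.vars, hv])),
        ih2 (fun v hv => h v (by simp [PropForm.vars, hv]))]
  | iff φ χ ih1 ih2 =>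
      simp only [PropForm.eval]
      rw [ih1 (fun v hv => h v (by simp [PropForm.vars, hv])),
        ih2 (fun v hv => h v (by simp [PropForm.vars, hv]))]

lemma PropForm.bigAnd_eval {α : Type} (l : List (PropForm α)) (g : α → Bool) :
    (PropForm.bigAnd l).eval g = true ↔ ∀ φ ∈ l, φ.eval g = true := by
  induction l with
  | nil => simp [PropForm.bigAnd, PropForm.eval]
  | cons a l ih =>
      simp only [PropForm.bigAnd, List.foldr] at *
      simp [PropForm.eval, ih, List.mem_cons]

lemma witness_aux_iff {α : Type} [DecidableEq α]
    (X Y Z : Finset α) (hZ : Z ⊆ X)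
    (ψ : PropForm α) (hvars : ψ.vars ⊆ X ∪ Y)
    (fresh : α → α)
    (hfresh : ∀ v ∈ X \ Z, fresh v ∉ X ∪ Y) (f : α → Bool) :
    IsWitness (X ∪ (X \ Z).image fresh) (auxMatrix X Z fresh ψ) f ↔
      (IsWitness X ψ f ∧ ∀ v ∈ X \ Z, f (fresh v) = !f v) := by
  have himX : ∀ w ∈ (X \ Z).image fresh, w ∉ X ∪ Y := by
    intro w hw
    rcases Finset.mem_image.mp hw with ⟨v, hv, rfl⟩
    exact hfresh v hv
  constructor
  · intro H
    have hself : (auxMatrix X Z fresh ψ).eval f = true := H f (fun _ _ => rfl)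
    simp only [auxMatrix, PropForm.eval, Bool.and_eq_true] at hself
    have hconj := (PropForm.bigAnd_eval _ f).mp hself.2
    constructor
    · intro g hg
      set g' : α → Bool := fun w => if w ∈ (X \ Z).image fresh then f w else g w with hg'
      have h1 : ∀ v ∈ X ∪ (X \ Z).image fresh, g' v = f v := by
        intro v hv
        have hval : g' v = if v ∈ (X \ Z).image fresh then f v else g v := rfl
        rcases Finset.mem_union.mp hv with hv | hv
        · have hni : v ∉ (X \ Z).image fresh := fun h => himX v h (Finset.mem_union_left _ hv)
          rw [hval, if_neg hni, hg v hv]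
        · rw [hval, if_pos hv]
      have h2 := H g' h1
      simp only [auxMatrix, PropForm.eval, Bool.and_eq_true] at h2
      have := h2.1
      rwa [PropForm.eval_congr ψ g' g (fun v hv => by
        have hvXY := hvars hv
        have hni : v ∉ (X \ Z).image fresh := fun h => himX v h hvXY
        have hval : g' v = if v ∈ (X \ Z).image fresh then f v else g v := rfl
        rw [hval, if_neg hni])] at this
    · intro v hv
      have hmem : (PropForm.iff (.var v) (.not (.var (fresh v)))).eval f = true := by
        apply hconj
        exact List.mem_map.mpr ⟨v, Finset.mem_toList.mpr hv, rfl⟩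
      simp only [PropForm.eval, beq_iff_eq] at hmem
      simp [hmem]
  · rintro ⟨Hw, Hfr⟩
    intro g hg
    simp only [auxMatrix, PropForm.eval, Bool.and_eq_true]
    constructor
    · exact Hw g (fun v hv => hg v (Finset.mem_union_left _ hv))
    · apply (PropForm.bigAnd_eval _ g).mpr
      intro φ hφ
      rcases List.mem_map.mp hφ with ⟨v, hv, rfl⟩
      have hv' := Finset.mem_toList.mp hv
      have h1 : g v = f v := hg v (Finset.mem_union_left _ (Finset.mem_sdiff.mp hv').1)
      have h2 : g (fresh v) = f (fresh v) :=
        hg _ (Finset.mem_union_right _ (Finset.mem_image_of_mem fresh hv'))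
      simp [PropForm.eval, h1, h2, Hfr v hv']

lemma count_aux {α : Type} [DecidableEq α]
    (X Z : Finset α) (hZ : Z ⊆ X)
    (fresh : α → α) (hinj : Set.InjOn fresh (X \ Z : Finset α))
    (hfreshX : ∀ v ∈ X \ Z, fresh v ∉ X) (f : α → Bool)
    (Hfr : ∀ v ∈ X \ Z, f (fresh v) = !f v) :
    ((X ∪ (X \ Z).image fresh).filter fun v => f v = true).card =
      (Z.filter fun v => f v = true).card + (X \ Z).card := by
  have hdisj : Disjoint X ((X \ Z).image fresh) := by
    rw [Finset.disjoint_right]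
    intro w hw
    rcases Finset.mem_image.mp hw with ⟨v, hv, rfl⟩
    exact hfreshX v hv
  rw [Finset.filter_union, Finset.card_union_of_disjoint
    (Finset.disjoint_filter_filter hdisj)]
  have hXsplit : X.filter (fun v => f v = true) =
      Z.filter (fun v => f v = true) ∪ (X \ Z).filter (fun v => f v = true) := by
    rw [← Finset.filter_union, Finset.union_sdiff_of_subset hZ]
  have hdisjZ : Disjoint (Z.filter fun v => f v = true)
      ((X \ Z).filter fun v => f v = true) :=
    Finset.disjoint_filter_filter (Finset.disjoint_sdiff)
  rw [hXsplit, Finset.card_union_of_disjoint hdisjZ]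
  have himg : ((X \ Z).image fresh).filter (fun v => f v = true) =
      ((X \ Z).filter fun v => f (fresh v) = true).image fresh := by
    rw [Finset.filter_image]
  rw [himg, Finset.card_image_of_injOn (hinj.mono (by
    intro x hx; exact Finset.mem_coe.mpr (Finset.filter_subset _ _ hx)))]
  have hflip : (X \ Z).filter (fun v => f (fresh v) = true) =
      (X \ Z).filter (fun v => ¬ (f v = true)) := by
    apply Finset.filter_congr
    intro v hv
    rw [Hfr v hv]
    simp
  rw [hflip, add_assoc, Finset.card_filter_add_card_filter_not]

/-- Let `Ψ = ∃X∀Y ψ` be a closed QBF that has a witness, `Z ⊆ X`,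
`U = X \ Z`, with fresh variables `fresh '' U`, and let
`Ψ' = ∃(X ∪ fresh '' U)∀Y (ψ ∧ ⋀_{v ∈ U}(v ↔ ¬ fresh v))`.  Then
`SUBSET_MAXQSAT₂(Ψ, Z) = MAXQSAT₂(Ψ') − |U|`. -/
theorem subset_maxqsat2_eq {α : Type} [DecidableEq α]
    (X Y Z : Finset α) (hXY : Disjoint X Y) (hZ : Z ⊆ X)
    (ψ : PropForm α) (hvars : ψ.vars ⊆ X ∪ Y)
    (hw : ∃ f, IsWitness X ψ f)
    (fresh : α → α) (hinj : Set.InjOn fresh (X \ Z : Finset α))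
    (hfresh : ∀ v ∈ X \ Z, fresh v ∉ X ∪ Y) :
    SUBSET_MAXQSAT2 X Z ψ =
      MAXQSAT2 (X ∪ (X \ Z).image fresh) (auxMatrix X Z fresh ψ)
        - ((X \ Z).card : ℤ) := by
  classical
  have hfreshX : ∀ v ∈ X \ Z, fresh v ∉ X :=
    fun v hv h => hfresh v hv (Finset.mem_union_left _ h)
  set c : ℤ := ((X \ Z).card : ℤ) with hc
  set S : Set ℤ := {k : ℤ | ∃ f, IsWitness X ψ f ∧
      ((Z.filter fun v => f v = true).card : ℤ) = k} with hS
  set S' : Set ℤ := {k : ℤ | ∃ f,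
      IsWitness (X ∪ (X \ Z).image fresh) (auxMatrix X Z fresh ψ) f ∧
      (((X ∪ (X \ Z).image fresh).filter fun v => f v = true).card : ℤ) = k} with hS'
  -- building a witness for the auxiliary formula from a witness for ψ
  have build : ∀ f : α → Bool, IsWitness X ψ f →
      ((Z.filter fun v => f v = true).card : ℤ) + c ∈ S' := by
    intro f hf
    set f' : α → Bool := fun w =>
      if w ∈ ((X \ Z).filter fun v => f v = true).image fresh then false
      else if w ∈ (X \ Z).image fresh then true else f w with hf'
    have hagree : ∀ v ∈ X, f' v = f v := by
      intro v hv
      have h1 : v ∉ (X \ Z).image fresh := by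
        intro h
        rcases Finset.mem_image.mp h with ⟨u, hu, rfl⟩
        exact hfreshX u hu hv
      have h2 : v ∉ ((X \ Z).filter fun v => f v = true).image fresh := by
        intro h
        rcases Finset.mem_image.mp h with ⟨u, hu, rfl⟩
        exact hfreshX u (Finset.filter_subset _ _ hu) hv
      have hval : f' v = if v ∈ ((X \ Z).filter fun v => f v = true).image fresh then false
          else if v ∈ (X \ Z).image fresh then true else f v := rfl
      rw [hval, if_neg h2, if_neg h1]
    have Hfr : ∀ v ∈ X \ Z, f' (fresh v) = !f' v := by
      intro v hv
      have hvval : f' v = f v := hagree v (Finset.mem_sdiff.mp hv).1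
      have hval : f' (fresh v) =
          if fresh v ∈ ((X \ Z).filter fun v => f v = true).image fresh then false
          else if fresh v ∈ (X \ Z).image fresh then true else f (fresh v) := rfl
      by_cases hfv : f v = true
      · have hmem : fresh v ∈ ((X \ Z).filter fun v => f v = true).image fresh :=
          Finset.mem_image_of_mem fresh (Finset.mem_filter.mpr ⟨hv, hfv⟩)
        rw [hval, if_pos hmem, hvval, hfv]
        rfl
      · have hmem : fresh v ∉ ((X \ Z).filter fun v => f v = true).image fresh := by
          intro h
          rcases Finset.mem_image.mp h with ⟨u, hu, heq⟩
          rcases Finset.mem_filter.mp hu with ⟨hu1, hu2⟩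
          have : u = v := hinj (Finset.mem_coe.mpr hu1) (Finset.mem_coe.mpr hv) heq
          rw [this] at hu2; exact hfv hu2
        have hmem2 : fresh v ∈ (X \ Z).image fresh := Finset.mem_image_of_mem fresh hv
        simp only [Bool.not_eq_true] at hfv
        rw [hval, if_neg hmem, if_pos hmem2, hvval, hfv]
        rfl
    have hwit : IsWitness X ψ f' := by
      intro g hg
      exact hf g (fun v hv => (hg v hv).trans (hagree v hv))
    have hwit' : IsWitness (X ∪ (X \ Z).image fresh) (auxMatrix X Z fresh ψ) f' :=
      (witness_aux_iff X Y Z hZ ψ hvars fresh hfresh f').mpr ⟨hwit, Hfr⟩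
    refine ⟨f', hwit', ?_⟩
    rw [count_aux X Z hZ fresh hinj hfreshX f' Hfr]
    have : Z.filter (fun v => f' v = true) = Z.filter (fun v => f v = true) := by
      apply Finset.filter_congr
      intro v hv
      rw [hagree v (hZ hv)]
    rw [this]
    push_cast
    ring
  -- every element of S' is an element of S shifted by c
  have shift : ∀ k ∈ S', ∃ m ∈ S, k = m + c := by
    rintro k ⟨f, hf, rfl⟩
    rcases (witness_aux_iff X Y Z hZ ψ hvars fresh hfresh f).mp hf with ⟨hw1, hw2⟩
    refine ⟨((Z.filter fun v => f v = true).card : ℤ), ⟨f, hw1, rfl⟩, ?_⟩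
    rw [count_aux X Z hZ fresh hinj hfreshX f hw2]
    push_cast
    ring
  obtain ⟨f0, hf0⟩ := hw
  have hSne : S.Nonempty := ⟨_, f0, hf0, rfl⟩
  have hS'ne : S'.Nonempty := ⟨_, build f0 hf0⟩
  have hw' : ∃ f, IsWitness (X ∪ (X \ Z).image fresh) (auxMatrix X Z fresh ψ) f := by
    obtain ⟨k, f, hf, _⟩ := hS'ne
    exact ⟨f, hf⟩
  have hSbdd : BddAbove S := by
    refine ⟨(Z.card : ℤ), ?_⟩
    rintro k ⟨f, hf, rfl⟩
    exact_mod_cast Finset.card_filter_le _ _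
  have hS'bdd : BddAbove S' := by
    refine ⟨(Z.card : ℤ) + c, ?_⟩
    intro k hk
    rcases shift k hk with ⟨m, hm, rfl⟩
    have : m ≤ (Z.card : ℤ) := by
      rcases hm with ⟨f, hf, rfl⟩
      exact_mod_cast Finset.card_filter_le _ _
    linarith
  rw [SUBSET_MAXQSAT2, MAXQSAT2, if_pos ⟨f0, hf0⟩, if_pos hw']
  have h1 : sSup S ≤ sSup S' - c := by
    apply csSup_le hSne
    rintro m ⟨f, hf, rfl⟩
    have hmem := build f hf
    have := le_csSup hS'bdd hmem
    linarith
  have h2 : sSup S' - c ≤ sSup S := by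
    have : sSup S' ≤ sSup S + c := by
      apply csSup_le hS'ne
      intro k hk
      rcases shift k hk with ⟨m, hm, rfl⟩
      have := le_csSup hSbdd hm
      linarith
    linarith
  exact le_antisymm h1 h2
end
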